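/- arXiv:2501.07481 — 6 statements merged into one kernel-verified Lean document; each statement's English description precedes it below -/
import Mathlib

section
/- Let R be a ring with the discrete topology and equip M = ∏_{n ∈ ℕ} R with the product topology. Every continuous R-linear map φ : M → R (R discrete) factors through a projection onto finitely many coordinates; consequently the R-module of continuous R-linear maps M → R is isomorphic to the direct sum ⊕_{n ∈ ℕ} R, via sending a finitely supported family (aₙ) to the functional (xₙ) ↦ ∑ₙ aₙ xₙ. -/
/-- Let `R` be a (discrete) ring and `M = ∏_{n ∈ ℕ} R` with the product
topology. Every continuous `R`-linear map `φ : M → R` factors through a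
projection onto finitely many coordinates; consequently the `R`-module of
continuous `R`-linear functionals on `M` is isomorphic to `⊕_{n ∈ ℕ} R`, via
sending a finitely supported family `(aₙ)` to `(xₙ) ↦ ∑ₙ aₙ xₙ`. -/
theorem stmt_4 (R : Type) [CommRing R] :
    letI : TopologicalSpace R := ⊥
    (∀ φ : (∀ _ : ℕ, R) →ₗ[R] R, Continuous φ →
      ∃ s : Finset ℕ, ∀ x y : ∀ _ : ℕ, R, (∀ n ∈ s, x n = y n) → φ x = φ y) ∧
    ∃ Θ : (ℕ →₀ R) →ₗ[R] ((∀ _ : ℕ, R) →ₗ[R] R),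
      (∀ (a : ℕ →₀ R) (x : ∀ _ : ℕ, R), Θ a x = a.sum fun n c => c * x n) ∧
      Function.Injective Θ ∧
      (∀ φ : (∀ _ : ℕ, R) →ₗ[R] R, Continuous φ ↔ φ ∈ Set.range Θ) := by
  letI : TopologicalSpace R := ⊥
  haveI : DiscreteTopology R := ⟨rfl⟩
  haveI : ContinuousAdd R := ⟨continuous_of_discreteTopology⟩
  let e : ℕ → ∀ _ : ℕ, R := fun n => Pi.single n 1
  have he : ∀ n m, e n m = if m = n then 1 else 0 := by
    intro n m; simp [e, Pi.single_apply]
  have key : ∀ φ : (∀ _ : ℕ, R) →ₗ[R] R, Continuous φ →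
      ∃ s : Finset ℕ, ∀ x y : ∀ _ : ℕ, R, (∀ n ∈ s, x n = y n) → φ x = φ y := by
    intro φ hφ
    have h0 : IsOpen (φ ⁻¹' {0}) := (isOpen_discrete _).preimage hφ
    have h0mem : (0 : ∀ _ : ℕ, R) ∈ φ ⁻¹' {0} := by simp
    obtain ⟨F, U, hU, hsub⟩ := isOpen_pi_iff.mp h0 0 h0mem
    refine ⟨F, fun x y hxy => ?_⟩
    have hz : x - y ∈ φ ⁻¹' {0} := by
      apply hsub
      intro n hn
      have h1 : (x - y) n = 0 := by simp [hxy n hn]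
      rw [h1]
      simpa using (hU n hn).2
    simpa [sub_eq_zero] using hz
  refine ⟨key, Finsupp.lsum R fun n => LinearMap.toSpanSingleton R _ (LinearMap.proj n), ?_, ?_, ?_⟩
  case refine_1 =>
    intro a x
    simp [Finsupp.sum, LinearMap.toSpanSingleton_apply, smul_eq_mul]
  case refine_2 =>
    set Θ := Finsupp.lsum R fun n => LinearMap.toSpanSingleton R ((∀ _ : ℕ, R) →ₗ[R] R) (LinearMap.proj n) with hΘ
    have heval : ∀ (a : ℕ →₀ R) (n : ℕ), Θ a (e n) = a n := by
      intro a n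
      have : Θ a (e n) = a.sum fun m c => c * e n m := by
        simp [hΘ, Finsupp.sum, LinearMap.toSpanSingleton_apply, smul_eq_mul]
      rw [this]
      simp only [he]
      rw [Finsupp.sum]
      rw [Finset.sum_eq_single n]
      · by_cases h : n ∈ a.support
        · simp
        · simp [Finsupp.notMem_support_iff.mp h]
      · intro m _ hm; simp [he, hm]
      · intro h; simp [Finsupp.notMem_support_iff.mp h]
    intro a b hab
    ext n
    rw [← heval a n, ← heval b n, hab]
  case refine_3 =>
    set Θ := Finsupp.lsum R fun n => LinearMap.toSpanSingleton R ((∀ _ : ℕ, R) →ₗ[R] R) (LinearMap.proj n) with hΘ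
    have hformula : ∀ (a : ℕ →₀ R) (x : ∀ _ : ℕ, R), Θ a x = a.sum fun n c => c * x n := by
      intro a x
      simp [hΘ, Finsupp.sum, LinearMap.toSpanSingleton_apply, smul_eq_mul]
    intro φ
    constructor
    · intro hφ
      obtain ⟨s, hs⟩ := key φ hφ
      refine ⟨∑ n ∈ s, Finsupp.single n (φ (e n)), ?_⟩
      apply LinearMap.ext
      intro x
      have h1 : Θ (∑ n ∈ s, Finsupp.single n (φ (e n))) x
          = ∑ n ∈ s, φ (e n) * x n := by
        rw [map_sum]
        rw [LinearMap.sum_apply]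
        refine Finset.sum_congr rfl fun n _ => ?_
        rw [hformula]
        rw [Finsupp.sum_single_index]
        · simp
      rw [h1]
      have h2 : ∑ n ∈ s, φ (e n) * x n = φ (∑ n ∈ s, x n • e n) := by
        rw [map_sum]
        refine Finset.sum_congr rfl fun n _ => ?_
        rw [map_smul, smul_eq_mul, mul_comm]
      rw [h2]
      apply hs
      intro m hm
      rw [Finset.sum_apply]
      rw [Finset.sum_eq_single m]
      · simp [he]
      · intro n _ hn; simp [he, Ne.symm hn]
      · intro h; exact absurd hm h
    · rintro ⟨a, rfl⟩
      have : (⇑(Θ a)) = fun x => ∑ n ∈ a.support, a n * x n := by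
        funext x
        rw [hformula]; rfl
      rw [this]
      apply continuous_finset_sum
      intro n _
      exact Continuous.comp continuous_of_discreteTopology (continuous_apply n)
end

section
/- Let R be a ring with the discrete topology. The R-module of continuous R-linear endomorphisms of ∏_{n ∈ ℕ} R (product topology) is isomorphic to ∏_{n ∈ ℕ} (⊕_{m ∈ ℕ} R), by recording, for each output coordinate n, the finitely supported family of coefficients describing the n-th component of the map. -/
/-- Let `R` be a (discrete) ring. The `R`-module of continuous `R`-linear
endomorphisms of `∏_{n ∈ ℕ} R` (product topology) is isomorphic to
`∏_{n ∈ ℕ} (⊕_{m ∈ ℕ} R)`, by recording, for each output coordinate `n`, the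
finitely supported family of coefficients describing the `n`-th component. -/
theorem stmt_5 (R : Type) [CommRing R] :
    letI : TopologicalSpace R := ⊥
    ∃ Θ : (ℕ → (ℕ →₀ R)) →ₗ[R] ((∀ _ : ℕ, R) →ₗ[R] (∀ _ : ℕ, R)),
      (∀ (a : ℕ → (ℕ →₀ R)) (x : ∀ _ : ℕ, R) (n : ℕ),
        Θ a x n = (a n).sum fun m c => c * x m) ∧
      Function.Injective Θ ∧
      (∀ φ : (∀ _ : ℕ, R) →ₗ[R] (∀ _ : ℕ, R), Continuous φ ↔ φ ∈ Set.range Θ) := by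
  letI : TopologicalSpace R := ⊥
  haveI : DiscreteTopology R := ⟨rfl⟩
  set Θ : (ℕ → (ℕ →₀ R)) →ₗ[R] ((∀ _ : ℕ, R) →ₗ[R] (∀ _ : ℕ, R)) :=
    { toFun := fun a =>
        { toFun := fun x n => (a n).sum fun m c => c * x m
          map_add' := by
            intro x y
            funext n
            simp only [Pi.add_apply, mul_add]
            exact Finsupp.sum_add
          map_smul' := by
            intro c x
            funext n
            simp only [Pi.smul_apply, smul_eq_mul, RingHom.id_apply]
            rw [Finsupp.mul_sum]
            exact Finsupp.sum_congr fun m _ => (mul_left_comm _ _ _)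
        }
      map_add' := by
        intro a b
        ext x n
        simp only [LinearMap.coe_mk, AddHom.coe_mk, Pi.add_apply, LinearMap.add_apply]
        rw [Finsupp.sum_add_index (fun m _ => zero_mul (x m))
          (fun m _ c d => add_mul c d (x m))]
      map_smul' := by
        intro c a
        ext x n
        simp only [LinearMap.coe_mk, AddHom.coe_mk, Pi.smul_apply, RingHom.id_apply,
          LinearMap.smul_apply, smul_eq_mul]
        rw [Finsupp.sum_smul_index (fun m => zero_mul (x m)), Finsupp.mul_sum]
        exact Finsupp.sum_congr fun m _ => (mul_assoc _ _ _)
    } with hΘ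
  have hform : ∀ (a : ℕ → (ℕ →₀ R)) (x : ∀ _ : ℕ, R) (n : ℕ),
      Θ a x n = (a n).sum fun m c => c * x m := fun a x n => rfl
  -- evaluation at Pi.single recovers coefficients
  have heval : ∀ (a : ℕ → (ℕ →₀ R)) (m n : ℕ), Θ a (Pi.single m 1) n = a n m := by
    intro a m n
    rw [hform]
    rcases eq_or_ne (a n m) 0 with h0 | h0
    · rw [h0]
      apply Finset.sum_eq_zero
      intro m' hm'
      rcases eq_or_ne m' m with rfl | hne
      · rw [Finsupp.mem_support_iff] at hm'; exact absurd h0 hm'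
      · simp [Pi.single_apply, hne]
    · rw [Finsupp.sum_eq_single m (fun m' _ hne => by simp [Pi.single_apply, hne])
        (fun h => by simp)]
      simp
  refine ⟨Θ, hform, ?_, ?_⟩
  · -- injectivity
    intro a b hab
    funext n
    ext m
    have := congrFun (DFunLike.congr_fun hab (Pi.single m 1)) n
    rwa [heval, heval] at this
  · intro φ
    constructor
    · -- continuous → in range
      intro hφ
      have key : ∀ n : ℕ, ∃ I : Finset ℕ, ∀ x : ∀ _ : ℕ, R, (∀ i ∈ I, x i = 0) → φ x n = 0 := by
        intro n
        have hc : Continuous fun x : ∀ _ : ℕ, R => φ x n :=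
          (continuous_apply n).comp hφ
        have hopen : IsOpen ((fun x : ∀ _ : ℕ, R => φ x n) ⁻¹' {0}) :=
          (isOpen_discrete _).preimage hc
        have h0 : (0 : ∀ _ : ℕ, R) ∈ (fun x : ∀ _ : ℕ, R => φ x n) ⁻¹' {0} := by
          simp [map_zero]
        obtain ⟨I, u, hu, hsub⟩ := isOpen_pi_iff.mp hopen 0 h0
        refine ⟨I, fun x hx => ?_⟩
        have : x ∈ Set.pi (I : Set ℕ) u := by
          intro i hi
          rw [hx i hi]
          exact (hu i hi).2
        exact hsub this
      choose I hI using key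
      -- the coefficient family
      have hsupp : ∀ n m, m ∉ I n → φ (Pi.single m 1) n = 0 := by
        intro n m hm
        apply hI n
        intro i hi
        have : m ≠ i := fun h => hm (h ▸ hi)
        simp [Pi.single_apply, this.symm]
      refine ⟨fun n => Finsupp.onFinset (I n) (fun m => φ (Pi.single m 1) n)
        (fun m hm => by by_contra h; exact hm (hsupp n m h)), ?_⟩
      ext x n
      rw [hform, Finsupp.onFinset_sum _ (fun m => zero_mul (x m))]
      -- decompose x
      set s : ℕ → R := ∑ m ∈ I n, x m • (Pi.single m (1 : R) : ℕ → R) with hs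
      have hy : φ (x - s) n = 0 := by
        apply hI n
        intro i hi
        simp only [Pi.sub_apply, hs, Finset.sum_apply, Pi.smul_apply, smul_eq_mul,
          Pi.single_apply, mul_ite, mul_one, mul_zero]
        rw [Finset.sum_ite_eq (I n) i x]
        simp [hi]
      have : φ x n = φ s n := by
        have h2 : φ x n - φ s n = 0 := by
          rw [← Pi.sub_apply (φ x) (φ s), ← map_sub φ x s]; exact hy
        exact sub_eq_zero.mp h2
      rw [this, hs, map_sum]
      rw [Finset.sum_apply]
      apply Finset.sum_congr rfl
      intro m _
      rw [map_smul]
      simp [mul_comm]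
    · -- in range → continuous
      rintro ⟨a, rfl⟩
      apply continuous_pi
      intro n
      haveI : ContinuousAdd R := ⟨continuous_of_discreteTopology⟩
      simp only [hform]
      have : (fun x : ∀ _ : ℕ, R => (a n).sum fun m c => c * x m)
          = fun x : ∀ _ : ℕ, R => ∑ m ∈ (a n).support, a n m * x m := rfl
      rw [this]
      apply continuous_finset_sum
      intro m _
      exact continuous_of_discreteTopology.comp (continuous_apply m)
end

section
/- (Specker's theorem) The ℤ-module Hom_ℤ(∏_{n ∈ ℕ} ℤ, ℤ) is isomorphic to ⊕_{n ∈ ℕ} ℤ: every group homomorphism from the Baer–Specker group ∏_ℕ ℤ to ℤ is a finite ℤ-linear combination of the coordinate projections. -/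
/-!
A homomorphism `φ : (ℕ → ℤ) →ₗ[ℤ] ℤ` is continuous in the `ℤ`-adic sense: if `d` divides every
`x n` with `n ≥ m`, then `φ x ≡ ∑_{i<m} x i * φ eᵢ [ZMOD d]`.

Applied to the weights `Wⱼ = ∏_{i<j} 2 (|φ eᵢ| + 1)`, a divisibility chain chosen so that the
partial sums `Pⱼ = ∑_{i<j} Wᵢ φ eᵢ` satisfy `2 |Pⱼ| < Wⱼ`, this gives `φ W ≡ Pⱼ [ZMOD Wⱼ]`.
Once `Wⱼ > 2 |φ W|` both sides are balanced residues, so `φ W = Pⱼ = Pⱼ₊₁` and `φ eⱼ = 0`.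
Hence `a n = φ eₙ` is finitely supported, and `ψ = φ - ∑ aₙ πₙ` kills every `eₙ`. Such a `ψ`
vanishes on every `y` with `2 ^ n ∣ y n` for all `n`, since `ψ y` is then divisible by every
`2 ^ m`; likewise for `3 ^ n`, and `gcd (2 ^ n, 3 ^ n) = 1` splits every sequence into a sum of
two such.
-/

open Finset Filter

theorem LinearMap.dvd_apply_of_forall_dvd {ι : Type*} (φ : (ι → ℤ) →ₗ[ℤ] ℤ) {d : ℤ}
    {x : ι → ℤ} (h : ∀ i, d ∣ x i) : d ∣ φ x := by
  choose w hw using h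
  rw [show x = d • w from funext hw, map_smul, smul_eq_mul]
  exact dvd_mul_right d (φ w)

theorem sum_range_single_eq_ite {M : Type*} [AddCommMonoid M] (x : ℕ → M) (m : ℕ) :
    ∑ i ∈ range m, Pi.single i (x i) = fun n => if n < m then x n else 0 := by
  classical
  ext n
  simp [Finset.sum_apply, Pi.single_apply]

theorem LinearMap.dvd_apply_sub_sum_of_dvd_tail (φ : (ℕ → ℤ) →ₗ[ℤ] ℤ) {d : ℤ} {m : ℕ}
    {x : ℕ → ℤ} (h : ∀ n, m ≤ n → d ∣ x n) :
    d ∣ φ x - ∑ i ∈ Finset.range m, x i * φ (Pi.single i 1) := by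
  have hsum : ∑ i ∈ Finset.range m, x i * φ (Pi.single i 1) =
      φ (∑ i ∈ Finset.range m, Pi.single i (x i)) := by
    simp_rw [map_sum, ← smul_eq_mul, ← map_smul, ← Pi.single_smul', smul_eq_mul, mul_one]
  rw [hsum, ← map_sub, sum_range_single_eq_ite]
  refine φ.dvd_apply_of_forall_dvd fun n => ?_
  by_cases hn : n < m
  · simp [hn]
  · simpa [hn] using h n (not_lt.mp hn)

theorem LinearMap.apply_eq_zero_of_pow_dvd (φ : (ℕ → ℤ) →ₗ[ℤ] ℤ)
    (hφ : ∀ n, φ (Pi.single n 1) = 0) {d : ℤ} (hd : d.natAbs ≠ 1) {y : ℕ → ℤ}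
    (hy : ∀ n, d ^ n ∣ y n) : φ y = 0 := by
  by_contra hne
  refine FiniteMultiplicity.not_iff_forall.mpr (fun m => ?_)
    (Int.finiteMultiplicity_iff.2 ⟨hd, hne⟩)
  simpa [hφ] using φ.dvd_apply_sub_sum_of_dvd_tail (d := d ^ m) (m := m)
    fun n hn => (pow_dvd_pow d hn).trans (hy n)

theorem LinearMap.eq_zero_of_apply_single_eq_zero (φ : (ℕ → ℤ) →ₗ[ℤ] ℤ)
    (hφ : ∀ n, φ (Pi.single n 1) = 0) : φ = 0 := by
  ext x
  have hsplit : ∀ n, ∃ a b : ℤ, x n = 2 ^ n * a + 3 ^ n * b := fun n => by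
    obtain ⟨u, v, huv⟩ : IsCoprime ((2 : ℤ) ^ n) (3 ^ n) :=
      (Int.isCoprime_iff_gcd_eq_one.mpr rfl).pow
    exact ⟨u * x n, v * x n, by linear_combination (-x n) * huv⟩
  choose a b hab using hsplit
  rw [show x = (fun n => 2 ^ n * a n) + fun n => 3 ^ n * b n from funext hab, map_add,
    φ.apply_eq_zero_of_pow_dvd hφ (by decide) fun n => dvd_mul_right _ _,
    φ.apply_eq_zero_of_pow_dvd hφ (by decide) fun n => dvd_mul_right _ _]
  rfl

theorem eventually_eq_zero_of_dvd_sub_sum (R g : ℕ → ℤ) (N : ℤ)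
    (hR : ∀ j : ℕ, (j : ℤ) < R j)
    (hsum : ∀ j, 2 * |∑ i ∈ range j, R i * g i| < R j)
    (hN : ∀ j, R j ∣ N - ∑ i ∈ range j, R i * g i) : ∀ᶠ j in atTop, g j = 0 := by
  have hN_eq : ∀ j : ℕ, 2 * |N| ≤ j → N = ∑ i ∈ range j, R i * g i := fun j hj =>
    sub_eq_zero.mp <| Int.eq_zero_of_abs_lt_dvd (hN j) <| by
      linarith [abs_sub N (∑ i ∈ range j, R i * g i), hR j, hsum j]
  filter_upwards [eventually_ge_atTop (2 * N.natAbs)] with j hj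
  have hj' : 2 * |N| ≤ j := by rw [Int.abs_eq_natAbs]; exact_mod_cast hj
  have hstep := (hN_eq j hj').symm.trans (hN_eq (j + 1) (by push_cast; linarith))
  rw [sum_range_succ, left_eq_add] at hstep
  exact (mul_eq_zero.mp hstep).resolve_left (by linarith [hR j, Int.natCast_nonneg j])

def speckerWeight (g : ℕ → ℤ) (j : ℕ) : ℤ := ∏ i ∈ range j, 2 * (|g i| + 1)

theorem speckerWeight_succ (g : ℕ → ℤ) (j : ℕ) :
    speckerWeight g (j + 1) = speckerWeight g j * (2 * (|g j| + 1)) :=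
  prod_range_succ _ _

theorem speckerWeight_dvd (g : ℕ → ℤ) {j n : ℕ} (h : j ≤ n) :
    speckerWeight g j ∣ speckerWeight g n :=
  prod_dvd_prod_of_subset _ _ _ (range_mono h)

theorem natCast_lt_speckerWeight (g : ℕ → ℤ) (j : ℕ) : (j : ℤ) < speckerWeight g j := by
  induction j with
  | zero => simp [speckerWeight]
  | succ j ih =>
    rw [speckerWeight_succ]
    push_cast
    nlinarith [abs_nonneg (g j)]

theorem two_mul_abs_sum_lt_speckerWeight (g : ℕ → ℤ) (j : ℕ) :
    2 * |∑ i ∈ range j, speckerWeight g i * g i| < speckerWeight g j := by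
  induction j with
  | zero => simp [speckerWeight]
  | succ j ih =>
    have hpos : 0 < speckerWeight g j := by
      linarith [natCast_lt_speckerWeight g j, Int.natCast_nonneg j]
    rw [sum_range_succ, speckerWeight_succ]
    have hlast : |speckerWeight g j * g j| = speckerWeight g j * |g j| := by
      rw [abs_mul, abs_of_pos hpos]
    linarith [abs_add_le (∑ i ∈ range j, speckerWeight g i * g i) (speckerWeight g j * g j)]

theorem LinearMap.finite_support_apply_single (φ : (ℕ → ℤ) →ₗ[ℤ] ℤ) :
    (Function.support fun n => φ (Pi.single n 1)).Finite := by
  set g := fun n => φ (Pi.single n 1)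
  have hN : ∀ j, speckerWeight g j ∣
      φ (speckerWeight g) - ∑ i ∈ Finset.range j, speckerWeight g i * g i :=
    fun j => φ.dvd_apply_sub_sum_of_dvd_tail fun n hn => speckerWeight_dvd g hn
  have := eventually_eq_zero_of_dvd_sub_sum _ g _ (natCast_lt_speckerWeight g)
    (two_mul_abs_sum_lt_speckerWeight g) hN
  rwa [← Nat.cofinite_eq_atTop, eventually_cofinite] at this

noncomputable def finsuppToDualPi : (ℕ →₀ ℤ) →ₗ[ℤ] ((ℕ → ℤ) →ₗ[ℤ] ℤ) :=
  Finsupp.linearCombination ℤ fun n => LinearMap.proj n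

theorem finsuppToDualPi_apply (a : ℕ →₀ ℤ) (x : ℕ → ℤ) :
    finsuppToDualPi a x = a.sum fun n c => c * x n := by
  simp [finsuppToDualPi, Finsupp.linearCombination_apply, LinearMap.finsupp_sum_apply]

theorem finsuppToDualPi_apply_single (a : ℕ →₀ ℤ) (n : ℕ) :
    finsuppToDualPi a (Pi.single n 1) = a n := by
  classical
  simp [finsuppToDualPi_apply, Pi.single_apply, eq_comm]

/-- (Specker's theorem) `Hom_ℤ(∏_{n ∈ ℕ} ℤ, ℤ) ≅ ⊕_{n ∈ ℕ} ℤ`: every group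
homomorphism from the Baer–Specker group to `ℤ` is a finite `ℤ`-linear
combination of the coordinate projections. -/
theorem stmt_6 :
    ∃ Θ : (ℕ →₀ ℤ) →ₗ[ℤ] ((∀ _ : ℕ, ℤ) →ₗ[ℤ] ℤ),
      (∀ (a : ℕ →₀ ℤ) (x : ∀ _ : ℕ, ℤ), Θ a x = a.sum fun n c => c * x n) ∧
      Function.Bijective Θ := by
  refine ⟨finsuppToDualPi, finsuppToDualPi_apply, fun a b hab => ?_, fun φ => ?_⟩
  · ext n
    rw [← finsuppToDualPi_apply_single a, ← finsuppToDualPi_apply_single b, hab]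
  · refine ⟨Finsupp.ofSupportFinite _ φ.finite_support_apply_single, ?_⟩
    rw [← sub_eq_zero]
    refine LinearMap.eq_zero_of_apply_single_eq_zero _ fun n => ?_
    rw [LinearMap.sub_apply, finsuppToDualPi_apply_single, Finsupp.ofSupportFinite_coe, sub_self]
end

section
/- Every countable cofiltered category admits a coinitial (initial/cofinal in the appropriate sense) functor from ω^op, the opposite of the poset ℕ; equivalently, every countable cofiltered category has a coinitial sequence. -/
/-!
Enumerate the objects of `I` and, for every object `x`, the parallel pairs out of `x`. Build a
descending sequence `x₀ ← x₁ ← ⋯` in which `x (m+1)` lies below the `m`-th object and, writing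
`m = Nat.pair k r`, equalizes (after composing down to `x k`) the `r`-th parallel pair out of `x k`.
Every object then receives a map from the sequence and every parallel pair out of some `x n` is
equalized further down, which is the criterion for a functor out of the cofiltered category `ℕᵒᵖ`
to be initial.
-/

open CategoryTheory

universe v u

namespace CategoryTheory.IsCofiltered

variable {I : Type u}

noncomputable def enumObj [Nonempty I] [Countable I] : ℕ → I :=
  (exists_surjective_nat I).choose

lemma enumObj_surjective [Nonempty I] [Countable I] : Function.Surjective (enumObj (I := I)) :=
  (exists_surjective_nat I).choose_spec

variable [Category.{v} I]

noncomputable def enumPairs [Countable I] [∀ X Y : I, Countable (X ⟶ Y)] (x : I) :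
    ℕ → Σ d : I, (x ⟶ d) × (x ⟶ d) :=
  have : Nonempty (Σ d : I, (x ⟶ d) × (x ⟶ d)) := ⟨⟨x, 𝟙 x, 𝟙 x⟩⟩
  (exists_surjective_nat _).choose

lemma enumPairs_surjective [Countable I] [∀ X Y : I, Countable (X ⟶ Y)] (x : I) :
    Function.Surjective (enumPairs x) :=
  have : Nonempty (Σ d : I, (x ⟶ d) × (x ⟶ d)) := ⟨⟨x, 𝟙 x, 𝟙 x⟩⟩
  (exists_surjective_nat _).choose_spec

/-- A finite stage of the sequence: its last object `pt`, with `proj k` recording the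
composite map down to the `k`-th object (meaningful only for `k` up to the current index). -/
structure Stage (I : Type u) [Category.{v} I] where
  pt : I
  proj : ℕ → Σ y : I, pt ⟶ y

def Stage.pullback (s : Stage I) {x : I} (t : x ⟶ s.pt) (n : ℕ) : Stage I where
  pt := x
  proj k := if k = n then ⟨x, 𝟙 x⟩ else ⟨(s.proj k).1, t ≫ (s.proj k).2⟩

lemma Stage.pullback_proj_self (s : Stage I) {x : I} (t : x ⟶ s.pt) (n : ℕ) :
    (s.pullback t n).proj n = ⟨x, 𝟙 x⟩ :=
  if_pos rfl

lemma Stage.pullback_proj_of_ne (s : Stage I) {x : I} (t : x ⟶ s.pt) {n k : ℕ} (h : k ≠ n) :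
    (s.pullback t n).proj k = ⟨(s.proj k).1, t ≫ (s.proj k).2⟩ :=
  if_neg h

variable [IsCofiltered I] [Countable I] [∀ X Y : I, Countable (X ⟶ Y)]

attribute [local instance] IsCofiltered.nonempty

noncomputable def equalizeAfter {x : I} (p : Σ y : I, x ⟶ y) (r : ℕ) : Σ w : I, w ⟶ x :=
  ⟨eq (p.2 ≫ (enumPairs p.1 r).2.1) (p.2 ≫ (enumPairs p.1 r).2.2), eqHom _ _⟩

lemma equalizeAfter_condition {x : I} (p : Σ y : I, x ⟶ y) (r : ℕ) :
    (equalizeAfter p r).2 ≫ p.2 ≫ (enumPairs p.1 r).2.1 =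
      (equalizeAfter p r).2 ≫ p.2 ≫ (enumPairs p.1 r).2.2 :=
  eq_condition _ _

noncomputable def Stage.descend (s : Stage I) (m : ℕ) : Σ x : I, x ⟶ s.pt :=
  let e := equalizeAfter (s.proj m.unpair.1) m.unpair.2
  ⟨min e.1 (enumObj m), minToLeft _ _ ≫ e.2⟩

lemma Stage.descend_condition (s : Stage I) {m k r : ℕ} (hm : m.unpair = (k, r)) {y : I}
    {t : s.pt ⟶ y} (hk : s.proj k = ⟨y, t⟩) {d : I} {u v : y ⟶ d}
    (hr : enumPairs y r = ⟨d, u, v⟩) :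
    ((s.descend m).2 ≫ t) ≫ u = ((s.descend m).2 ≫ t) ≫ v := by
  obtain ⟨rfl, rfl⟩ : m.unpair.1 = k ∧ m.unpair.2 = r := by simp [hm]
  have h := equalizeAfter_condition ⟨y, t⟩ m.unpair.2
  rw [hr] at h
  dsimp only at h
  simp only [Stage.descend]
  rw [hk]
  simp only [Category.assoc, h]

noncomputable def Stage.step (s : Stage I) (m : ℕ) : Stage I :=
  s.pullback (s.descend m).2 (m + 1)

variable (I) in
noncomputable def stage : ℕ → Stage I
  | 0 => ⟨enumObj 0, fun _ => ⟨enumObj 0, 𝟙 _⟩⟩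
  | m + 1 => (stage m).step m

variable (I) in
noncomputable def tower : ℕᵒᵖ ⥤ I :=
  Functor.ofOpSequence (X := fun n => (stage I n).pt) fun m => ((stage I m).descend m).2

lemma tower_map_succ (m : ℕ) :
    (tower I).map (homOfLE (Nat.le_add_right m 1)).op = ((stage I m).descend m).2 :=
  Functor.ofOpSequence_map_homOfLE_succ _ m

lemma stage_proj_self : ∀ m : ℕ, (stage I m).proj m = ⟨(stage I m).pt, 𝟙 _⟩
  | 0 => rfl
  | _ + 1 => Stage.pullback_proj_self _ _ _

lemma stage_proj {k m : ℕ} (h : k ≤ m) :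
    (stage I m).proj k = ⟨(stage I k).pt, (tower I).map (homOfLE h).op⟩ := by
  induction m with
  | zero =>
    obtain rfl := Nat.le_zero.mp h
    rfl
  | succ m ih =>
    rcases h.eq_or_lt with rfl | hlt
    · rw [stage_proj_self, show (homOfLE h).op = 𝟙 _ from rfl, Functor.map_id]
      rfl
    · have hkm : k ≤ m := Nat.le_of_lt_succ hlt
      refine ((stage I m).pullback_proj_of_ne _ hlt.ne).trans ?_
      rw [ih hkm, ← homOfLE_comp hkm (Nat.le_add_right m 1), op_comp, Functor.map_comp,
        tower_map_succ]
      rfl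

lemma exists_tower_obj_hom (d : I) : ∃ n, Nonempty ((tower I).obj n ⟶ d) := by
  obtain ⟨m, rfl⟩ := enumObj_surjective d
  exact ⟨Opposite.op (m + 1), ⟨minToRight _ _⟩⟩

lemma exists_tower_map_comp_eq {n : ℕ} {d : I} (u v : (tower I).obj (Opposite.op n) ⟶ d) :
    ∃ (m : ℕ) (h : n ≤ m),
      (tower I).map (homOfLE h).op ≫ u = (tower I).map (homOfLE h).op ≫ v := by
  obtain ⟨r, hr⟩ := enumPairs_surjective (stage I n).pt ⟨d, u, v⟩
  have hn : n ≤ Nat.pair n r := Nat.left_le_pair n r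
  refine ⟨Nat.pair n r + 1, hn.trans (Nat.le_add_right _ 1), ?_⟩
  rw [← homOfLE_comp hn (Nat.le_add_right _ 1), op_comp, Functor.map_comp, tower_map_succ]
  exact Stage.descend_condition _ (Nat.unpair_pair n r) (stage_proj hn) hr

variable (I) in
theorem exists_initial_of_countable : ∃ F : ℕᵒᵖ ⥤ I, F.Initial := by
  refine ⟨tower I, (Functor.initial_iff_of_isCofiltered _).mpr ⟨exists_tower_obj_hom, ?_⟩⟩
  rintro d ⟨n⟩ u v
  obtain ⟨m, h, huv⟩ := exists_tower_map_comp_eq u v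
  exact ⟨Opposite.op m, (homOfLE h).op, huv⟩

end CategoryTheory.IsCofiltered

/-- Every countable cofiltered category admits a coinitial (initial) functor
from `ω^op`, the opposite of the poset `ℕ`; i.e. every countable cofiltered
category has a coinitial sequence. -/
theorem stmt_10 (I : Type) [SmallCategory I] [Countable I]
    [∀ X Y : I, Countable (X ⟶ Y)] [IsCofiltered I] :
    ∃ F : ℕᵒᵖ ⥤ I, F.Initial :=
  IsCofiltered.exists_initial_of_countable I
end

section
/- Let W be a bounded chain complex of R-modules concentrated in degrees [a, b] with each Wᵖ finitely generated. Then there exists a contractible bounded complex X of finitely generated free R-modules (a finite direct sum of disk complexes D(p) = (⋯ → 0 → R →^{id} R → 0 → ⋯)) together with a chain map g : X → W that is surjective in every degree in [a, b-1]. -/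
/-!
The mapping cone of the identity of any cochain complex `F` is contractible, and a morphism
`mappingCone (𝟙 F) ⟶ W` can be built from an arbitrary cochain `α : F ⟶ W` of degree `-1`:
it is `α` on the summand `F^{p+1}` of the cone in degree `p` and the chain map `δα` on the
summand `F^p`. Take for `F` the complex with zero differential whose degree `p` term is a
finitely generated free module surjecting, via `α`, onto `W^{p-1}` when `p - 1 ∈ [a, b-1]`,
and zero otherwise. Then `X = mappingCone (𝟙 F)` (a finite sum of disks) is degreewise finite
free, vanishes outside `[a, b+1]`, and `X ⟶ W` is surjective in the degrees of `[a, b-1]`.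
-/

open CategoryTheory CategoryTheory.Limits

universe u v

namespace CochainComplex

open HomComplex

abbrev withZeroDifferential {C : Type*} [Category* C] [HasZeroMorphisms C] (X : ℤ → C) :
    CochainComplex C ℤ where
  X := X
  d _ _ := 0

namespace mappingCone

section Preadditive

variable {C : Type*} [Category* C] [Preadditive C] [HasBinaryBiproducts C]
  {F K : CochainComplex C ℤ}

noncomputable def descOfId (α : Cochain F K (-1)) : mappingCone (𝟙 F) ⟶ K :=
  desc (𝟙 F) α (Cocycle.homOf (Cocycle.mk (δ (-1) 0 α) 1 (by norm_num) (δ_δ _ _ _ α)))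
    (by simp)

lemma inl_v_descOfId_f (α : Cochain F K (-1)) (p q : ℤ) (h : p + (-1) = q) :
    (inl (𝟙 F)).v p q h ≫ (descOfId α).f q = α.v p q h :=
  inl_v_desc_f _ _ _ _ p q h

end Preadditive

variable {R : Type u} [Ring R]

lemma descOfId_f_surjective {F K : CochainComplex (ModuleCat.{v} R) ℤ} (α : Cochain F K (-1))
    (p q : ℤ) (h : p + (-1) = q) (hα : Function.Surjective (α.v p q h)) :
    Function.Surjective ((descOfId α).f q) := by
  rw [← inl_v_descOfId_f α p q h, ConcreteCategory.coe_comp] at hα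
  exact hα.of_comp

variable {F G : CochainComplex (ModuleCat.{v} R) ℤ} (φ : F ⟶ G)

noncomputable def XLinearEquiv (p : ℤ) : (mappingCone φ).X p ≃ₗ[R] F.X (p + 1) × G.X p :=
  (HomologicalComplex.homotopyCofiber.XIsoBiprod φ p (p + 1) rfl ≪≫
    ModuleCat.biprodIsoProd _ _).toLinearEquiv

instance [∀ p, Module.Free R (F.X p)] [∀ p, Module.Free R (G.X p)] (p : ℤ) :
    Module.Free R ((mappingCone φ).X p) :=
  Module.Free.of_equiv (XLinearEquiv φ p).symm

instance [∀ p, Module.Finite R (F.X p)] [∀ p, Module.Finite R (G.X p)] (p : ℤ) :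
    Module.Finite R ((mappingCone φ).X p) :=
  Module.Finite.equiv (XLinearEquiv φ p).symm

end mappingCone

lemma exists_free_cochain_surjective_v {R : Type u} [Ring R]
    (K : CochainComplex (ModuleCat.{u} R) ℤ) (S : Set ℤ)
    (hK : ∀ q ∈ S, Module.Finite R (K.X q)) :
    ∃ (F : CochainComplex (ModuleCat.{u} R) ℤ) (α : Cochain F K (-1)),
      (∀ p, Module.Free R (F.X p)) ∧ (∀ p, Module.Finite R (F.X p)) ∧
      (∀ p, p - 1 ∉ S → IsZero (F.X p)) ∧
      ∀ p q (h : p + (-1) = q), q ∈ S → Function.Surjective (α.v p q h) := by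
  have generators : ∀ p, ∃ (m : ℕ) (π : (Fin m → R) →ₗ[R] K.X (p - 1)),
      (p - 1 ∉ S → m = 0) ∧ (p - 1 ∈ S → Function.Surjective π) := by
    intro p
    by_cases hp : p - 1 ∈ S
    · have := hK _ hp
      obtain ⟨m, π, hπ⟩ := Module.Finite.exists_fin' R (K.X (p - 1))
      exact ⟨m, π, fun h => absurd hp h, fun _ => hπ⟩
    · exact ⟨0, 0, fun _ => rfl, fun h => absurd h hp⟩
  choose n π hn hπ using generators
  refine ⟨withZeroDifferential fun p => ModuleCat.of R (Fin (n p) → R),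
    Cochain.mk fun p q h => ModuleCat.ofHom (π p) ≫ (K.XIsoOfEq (by lia)).hom,
    fun p => inferInstance, fun p => inferInstance, fun p hp => ?_, fun p q h hq => ?_⟩
  · have : IsEmpty (Fin (n p)) := by rw [hn p hp]; infer_instance
    exact ModuleCat.isZero_of_subsingleton _
  · rw [Cochain.mk_v, ConcreteCategory.coe_comp]
    exact (ConcreteCategory.bijective_of_isIso _).2.comp (hπ p (by rwa [show p - 1 = q by lia]))

end CochainComplex

theorem stmt_11_general (R : Type) [CommRing R] (a b : ℤ)
    (W : CochainComplex (ModuleCat.{0} R) ℤ)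
    (hWfg : ∀ p : ℤ, Module.Finite R (W.X p)) :
    ∃ (X : CochainComplex (ModuleCat.{0} R) ℤ) (g : X ⟶ W),
      (∀ p : ℤ, Module.Finite R (X.X p) ∧ Module.Free R (X.X p)) ∧
      (∀ p : ℤ, (p < a ∨ b + 1 < p) → IsZero (X.X p)) ∧
      Nonempty (Homotopy (𝟙 X) 0) ∧
      (∀ p : ℤ, a ≤ p → p ≤ b - 1 → Function.Surjective (g.f p)) := by
  obtain ⟨F, α, _, _, hF, hα⟩ :=
    CochainComplex.exists_free_cochain_surjective_v W (Set.Icc a (b - 1)) fun q _ => hWfg q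
  refine ⟨CochainComplex.mappingCone (𝟙 F), CochainComplex.mappingCone.descOfId α,
    fun p => ⟨inferInstance, inferInstance⟩, fun p hp => ?_,
    ⟨CochainComplex.mappingCone.homotopyToZeroOfId F⟩, fun p hpa hpb => ?_⟩
  · rw [CochainComplex.mappingCone.isZero_X_iff]
    exact ⟨hF (p + 1) (by simp only [Set.mem_Icc]; omega),
      hF p (by simp only [Set.mem_Icc]; omega)⟩
  · exact CochainComplex.mappingCone.descOfId_f_surjective α (p + 1) p (by omega)
      (hα _ _ _ ⟨hpa, hpb⟩)

/-- Let `W` be a bounded cochain complex of `R`-modules concentrated in degrees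
`[a, b]` with each `Wᵖ` finitely generated. Then there exists a contractible
bounded complex `X` of finitely generated free `R`-modules together with a
chain map `g : X → W` that is surjective in every degree in `[a, b-1]`. -/
theorem stmt_11 (R : Type) [CommRing R] (a b : ℤ)
    (W : CochainComplex (ModuleCat.{0} R) ℤ)
    (hWbd : ∀ p : ℤ, (p < a ∨ b < p) → IsZero (W.X p))
    (hWfg : ∀ p : ℤ, Module.Finite R (W.X p)) :
    ∃ (X : CochainComplex (ModuleCat.{0} R) ℤ) (g : X ⟶ W),
      (∀ p : ℤ, Module.Finite R (X.X p) ∧ Module.Free R (X.X p)) ∧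
      (∀ p : ℤ, (p < a ∨ b + 1 < p) → IsZero (X.X p)) ∧
      Nonempty (Homotopy (𝟙 X) 0) ∧
      (∀ p : ℤ, a ≤ p → p ≤ b - 1 → Function.Surjective (g.f p)) :=
  stmt_11_general R a b W hWfg
end

section
/- Let R be a ring with the discrete topology and M = ∏_{n∈ℕ} R with the product topology. For any R-module W (discrete), the canonical map colim_j Hom_R(∏_{0 ≤ n ≤ j} R, W) → Hom_cont(M, W) — induced by precomposition with the projections M → ∏_{0 ≤ n ≤ j} R — is an isomorphism of R-modules, where the left-hand colimit is along the split inclusions dual to the projections; equivalently, every continuous R-linear map M → W_discrete factors through a projection onto finitely many coordinates, uniquely in the colimit. -/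
/-- Let `R` be a (discrete) ring and `M = ∏_{n∈ℕ} R` with the product topology.
For any discrete `R`-module `W`, the canonical map
`colim_j Hom_R(∏_{0 ≤ n ≤ j} R, W) → Hom_cont(M, W)` is an isomorphism of
`R`-modules: computing the colimit (which identifies with `⊕_{n∈ℕ} W`, by
recording the images of the coordinates), every continuous `R`-linear map
`M → W` factors through a projection onto finitely many coordinates, uniquely
in the colimit. -/
theorem stmt_15 (R : Type) [CommRing R] (W : Type) [AddCommGroup W] [Module R W] :
    letI : TopologicalSpace R := ⊥
    letI : TopologicalSpace W := ⊥
    (∀ φ : (∀ _ : ℕ, R) →ₗ[R] W, Continuous φ →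
      ∃ j : ℕ, ∀ x y : ∀ _ : ℕ, R, (∀ n ≤ j, x n = y n) → φ x = φ y) ∧
    ∃ Θ : (ℕ →₀ W) →ₗ[R] ((∀ _ : ℕ, R) →ₗ[R] W),
      (∀ (a : ℕ →₀ W) (x : ∀ _ : ℕ, R), Θ a x = a.sum fun n w => x n • w) ∧
      Function.Injective Θ ∧
      (∀ φ : (∀ _ : ℕ, R) →ₗ[R] W, Continuous φ ↔ φ ∈ Set.range Θ) := by
  letI : TopologicalSpace R := ⊥
  letI : TopologicalSpace W := ⊥
  haveI : DiscreteTopology R := ⟨rfl⟩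
  haveI : DiscreteTopology W := ⟨rfl⟩
  -- Part 1
  have part1 : ∀ φ : (∀ _ : ℕ, R) →ₗ[R] W, Continuous φ →
      ∃ j : ℕ, ∀ x y : ∀ _ : ℕ, R, (∀ n ≤ j, x n = y n) → φ x = φ y := by
    intro φ hφ
    have hopen : IsOpen (φ ⁻¹' {0}) := (isOpen_discrete _).preimage hφ
    rw [isOpen_pi_iff] at hopen
    obtain ⟨I, u, hu, hsub⟩ := hopen 0 (by simp)
    refine ⟨I.sup id, ?_⟩
    have key : ∀ z : ∀ _ : ℕ, R, (∀ n ≤ I.sup id, z n = 0) → φ z = 0 := by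
      intro z hz
      have : z ∈ (I : Set ℕ).pi u := by
        intro n hn
        have := hz n (Finset.le_sup (f := id) hn)
        rw [this]
        exact (hu n hn).2
      exact hsub this
    intro x y hxy
    have : φ (x - y) = 0 := key _ (fun n hn => by simp [hxy n hn])
    rw [map_sub] at this
    exact sub_eq_zero.mp this
  -- converse continuity criterion
  have cont_of : ∀ (φ : (∀ _ : ℕ, R) →ₗ[R] W) (j : ℕ),
      (∀ x y : ∀ _ : ℕ, R, (∀ n ≤ j, x n = y n) → φ x = φ y) → Continuous φ := by
    intro φ j hj
    rw [continuous_def]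
    intro s _
    rw [isOpen_iff_forall_mem_open]
    intro x hx
    refine ⟨{y | ∀ n ≤ j, y n = x n}, fun y hy => ?_, ?_, fun n _ => rfl⟩
    · have : φ y = φ x := hj y x hy
      simpa [Set.mem_preimage, this] using hx
    · have : {y : ∀ _ : ℕ, R | ∀ n ≤ j, y n = x n} =
          ⋂ n ∈ Finset.Iic j, (fun y : ∀ _ : ℕ, R => y n) ⁻¹' {x n} := by
        ext y; simp
      rw [this]
      exact isOpen_biInter_finset fun n _ =>
        (isOpen_discrete _).preimage (continuous_apply n)
  refine ⟨part1, ?_⟩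
  -- the map Θ
  set Θ : (ℕ →₀ W) →ₗ[R] ((∀ _ : ℕ, R) →ₗ[R] W) :=
    Finsupp.lsum R (fun n => LinearMap.smulRightₗ (LinearMap.proj n)) with hΘdef
  have hΘ : ∀ (a : ℕ →₀ W) (x : ∀ _ : ℕ, R), Θ a x = a.sum fun n w => x n • w := by
    intro a x
    rw [hΘdef]
    simp [Finsupp.lsum, Finsupp.sum_apply, Finsupp.sum]
  have hsingle : ∀ (n : ℕ) (w : W), Θ (Finsupp.single n w) =
      (LinearMap.proj n (R := R) (φ := fun _ : ℕ => R)).smulRight w := by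
    intro n w
    ext x
    rw [hΘ]
    simp [Finsupp.sum_single_index]
  refine ⟨Θ, hΘ, ?_, ?_⟩
  · -- injectivity
    rw [injective_iff_map_eq_zero]
    intro a ha
    ext m
    have := congrArg (fun ψ : (∀ _ : ℕ, R) →ₗ[R] W => ψ (Pi.single m 1)) ha
    simp only [LinearMap.zero_apply] at this
    rw [hΘ] at this
    rw [Finsupp.sum] at this
    rcases eq_or_ne (a m) 0 with h | h
    · simpa using h
    · have hmem : m ∈ a.support := Finsupp.mem_support_iff.mpr h
      rw [Finset.sum_eq_single m (fun n _ hn => by simp [Pi.single_apply, hn])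
        (fun hm => absurd hmem hm)] at this
      simpa using this
  · intro φ
    constructor
    · intro hφ
      obtain ⟨j, hj⟩ := part1 φ hφ
      refine ⟨(Finset.Iic j).sum fun n => Finsupp.single n (φ (Pi.single n 1)), ?_⟩
      ext x
      set y : ℕ → R := (Finset.Iic j).sum fun n => x n • (Pi.single n 1 : ℕ → R) with hy
      have hyx : ∀ m ≤ j, y m = x m := by
        intro m hm
        rw [hy]
        simp only [Finset.sum_apply, Pi.smul_apply, Pi.single_apply, smul_eq_mul,
          mul_ite, mul_one, mul_zero]
        rw [Finset.sum_ite_eq (Finset.Iic j) m (fun n => x n)]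
        simp [hm]
      calc Θ ((Finset.Iic j).sum fun n => Finsupp.single n (φ (Pi.single n 1))) x
          = (Finset.Iic j).sum (fun n => x n • φ (Pi.single n 1)) := by
            rw [map_sum, LinearMap.sum_apply]
            refine Finset.sum_congr rfl fun n _ => by rw [hsingle]; rfl
        _ = φ y := by
            rw [hy, map_sum]
            exact (Finset.sum_congr rfl fun n _ => (map_smul φ _ _).symm)
        _ = φ x := hj y x fun n hn => hyx n hn
    · rintro ⟨a, rfl⟩
      refine cont_of _ (a.support.sup id) fun x y hxy => ?_
      rw [hΘ, hΘ]
      refine Finsupp.sum_congr fun n hn => ?_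
      rw [hxy n (Finset.le_sup (f := id) hn)]
end
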